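/- The number of polynomials over ℤ/pℤ in n variables, of degree at most p−1 in each variable, that agree with a given function f : S → ℤ/pℤ on a set S ⊆ (ℤ/pℤ)^n with |S| = m, is exactly p^{p^n − m}. -/
import Mathlib

open MvPolynomial LinearMap

theorem stmt_14 (p n m : ℕ) (hp : p.Prime) (hn : 1 ≤ n)
    (S : Finset (Fin n → ZMod p)) (hm : S.card = m)
    (f : (Fin n → ZMod p) → ZMod p) :
    {P : MvPolynomial (Fin n) (ZMod p) |
        (∀ i, P.degreeOf i ≤ p - 1) ∧
        ∀ a ∈ S, MvPolynomial.eval a P = f a}.ncard = p ^ (p ^ n - m) := by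
  haveI : Fact p.Prime := ⟨hp⟩
  classical
  have hcard : Fintype.card (ZMod p) = p := ZMod.card p
  -- the evaluation linear map is bijective on restricted-degree polynomials
  let V := MvPolynomial.restrictDegree (Fin n) (ZMod p) (Fintype.card (ZMod p) - 1)
  let L : V →ₗ[ZMod p] ((Fin n → ZMod p) → ZMod p) :=
    (MvPolynomial.evalₗ (ZMod p) (Fin n)).comp V.subtype
  have hbij : Function.Bijective L :=
    ⟨LinearMap.ker_eq_bot.mp (MvPolynomial.ker_evalₗ (Fin n) (ZMod p)),
     LinearMap.range_eq_top.mp (MvPolynomial.range_evalᵢ (Fin n) (ZMod p))⟩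
  let E : V ≃ₗ[ZMod p] ((Fin n → ZMod p) → ZMod p) :=
    LinearEquiv.ofBijective _ hbij
  have hE : ∀ (q : V) (a : Fin n → ZMod p),
      E q a = MvPolynomial.eval a (q : MvPolynomial (Fin n) (ZMod p)) := fun q a => rfl
  -- membership in restrictDegree ↔ degreeOf bound
  have hmem : ∀ P : MvPolynomial (Fin n) (ZMod p),
      (∀ i, P.degreeOf i ≤ p - 1) ↔
        P ∈ MvPolynomial.restrictDegree (Fin n) (ZMod p) (Fintype.card (ZMod p) - 1) := by
    intro P
    rw [MvPolynomial.mem_restrictDegree, hcard]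
    constructor
    · intro h s hs i
      exact MvPolynomial.degreeOf_le_iff.mp (h i) s hs
    · intro h i
      exact MvPolynomial.degreeOf_le_iff.mpr fun s hs => h s hs i
  -- bijection with functions agreeing with f on S
  let G : Set ((Fin n → ZMod p) → ZMod p) := {g | ∀ a ∈ S, g a = f a}
  let e : {P : MvPolynomial (Fin n) (ZMod p) |
        (∀ i, P.degreeOf i ≤ p - 1) ∧
        ∀ a ∈ S, MvPolynomial.eval a P = f a} ≃ G :=
    { toFun := fun P => ⟨E ⟨P.1, (hmem P.1).mp P.2.1⟩, by
        intro a ha; rw [hE]; exact P.2.2 a ha⟩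
      invFun := fun g => ⟨(E.symm g.1 : MvPolynomial (Fin n) (ZMod p)),
        (hmem _).mpr (E.symm g.1).2, by
          intro a ha
          rw [← hE]
          rw [E.apply_symm_apply]
          exact g.2 a ha⟩
      left_inv := fun P => by
        ext1
        have : E.symm (E ⟨P.1, (hmem P.1).mp P.2.1⟩) = ⟨P.1, (hmem P.1).mp P.2.1⟩ :=
          E.symm_apply_apply _
        simpa using congrArg Subtype.val this
      right_inv := fun g => by
        ext1
        exact E.apply_symm_apply g.1 }
  rw [← Nat.card_coe_set_eq, Nat.card_congr e]
  -- now count functions agreeing with f on S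
  let e2 : G ≃ ({a : Fin n → ZMod p // a ∉ S} → ZMod p) :=
    { toFun := fun g a => g.1 a.1
      invFun := fun h => ⟨fun a => if ha : a ∈ S then f a else h ⟨a, ha⟩, by
        intro a ha; simp [ha]⟩
      left_inv := fun g => by
        ext a
        by_cases ha : a ∈ S
        · simp [ha, g.2 a ha]
        · simp [ha]
      right_inv := fun h => by
        ext a
        simp [a.2] }
  rw [Nat.card_congr e2, Nat.card_eq_fintype_card, Fintype.card_fun, hcard]
  congr 1
  rw [Fintype.card_subtype_compl, Fintype.card_fun, hcard, Fintype.card_fin]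
  congr 1
  rw [← hm]
  exact Fintype.card_coe S
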